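/- For every c > 0 and every K ∈ [−c²/2, 0), the inequality c·cosh(√|K|/c) − √|K|·sinh(√|K|/c) > c + K/c holds. -/

import Mathlib

open Real Set

/- With `x = √|K| / c` the inequality reads `c (cosh x - x sinh x) > c (1 - x²)`, where `x² ≤ 1/2 < 1`.
Since `tanh x < x`, we get `x sinh x < x² cosh x`, so `cosh x - x sinh x > (1 - x²) cosh x > 1 - x²`. -/

lemma sinh_lt_mul_cosh {x : ℝ} (hx : 0 < x) : sinh x < x * cosh x := by
  let f : ℝ → ℝ := fun t ↦ t * cosh t - sinh t
  have hf_deriv (t : ℝ) : HasDerivAt f (t * sinh t) t :=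
    (((hasDerivAt_id' t).fun_mul (hasDerivAt_cosh t)).fun_sub
      (hasDerivAt_sinh t)).congr_deriv (by ring)
  have hf_mono : StrictMonoOn f (Ici 0) := by
    refine strictMonoOn_of_deriv_pos (convex_Ici 0) (by fun_prop) fun t ht ↦ ?_
    rw [interior_Ici] at ht
    rw [(hf_deriv t).deriv]
    exact mul_pos ht (sinh_pos_iff.2 ht)
  simpa [f] using hf_mono self_mem_Ici hx.le hx

lemma one_sub_sq_lt_cosh_sub_mul_sinh {x : ℝ} (hx₀ : 0 < x) (hx₁ : x ^ 2 < 1) :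
    1 - x ^ 2 < cosh x - x * sinh x := by
  have h_sinh : x * sinh x < x ^ 2 * cosh x := by
    calc x * sinh x < x * (x * cosh x) := mul_lt_mul_of_pos_left (sinh_lt_mul_cosh hx₀) hx₀
      _ = x ^ 2 * cosh x := by ring
  have h_cosh : 1 - x ^ 2 < (1 - x ^ 2) * cosh x :=
    lt_mul_of_one_lt_right (sub_pos.2 hx₁) (one_lt_cosh.2 hx₀.ne')
  linarith

/-- For `c > 0` and `K ∈ [-c²/2, 0)`,
`c cosh(√(-K)/c) - √(-K) sinh(√(-K)/c) > c + K/c`. -/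
theorem stmt_7 (c K : ℝ) (hc : 0 < c) (hK₁ : -c ^ 2 / 2 ≤ K) (hK₂ : K < 0) :
    c * Real.cosh (Real.sqrt (-K) / c)
      - Real.sqrt (-K) * Real.sinh (Real.sqrt (-K) / c) > c + K / c := by
  set s := √(-K)
  have hs : 0 < s := sqrt_pos.2 (neg_pos.2 hK₂)
  have hs_sq : s ^ 2 = -K := sq_sqrt (neg_nonneg.2 hK₂.le)
  set x := s / c with hx
  have hsx : s = c * x := by rw [hx]; field_simp
  have hx_sq : x ^ 2 < 1 := by
    rw [hx, div_pow, div_lt_one (by positivity)]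
    nlinarith
  calc c + K / c = c * (1 - x ^ 2) := by
        rw [← neg_neg K, ← hs_sq, hsx]
        field_simp
        ring
    _ < c * (cosh x - x * sinh x) :=
        mul_lt_mul_of_pos_left (one_sub_sq_lt_cosh_sub_mul_sinh (div_pos hs hc) hx_sq) hc
    _ = c * cosh x - s * sinh x := by rw [hsx]; ring
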